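/- arXiv:0802.2438 — 2 statements merged into one kernel-verified Lean document; each statement's English description precedes it below -/
import Mathlib

section
/- Let n ≥ 2, let U ⊆ ℂⁿ be open and connected, let γ_{jk} : U → ℂ (j ≠ k) be functions, and let b₁,…,bₙ : U → ℂ be differentiable nonvanishing functions satisfying ∂ₖbⱼ = −γ_{jk}·bⱼ for all j ≠ k and ∂ⱼbⱼ = bⱼ⁻¹·∑_{l≠j} bₗ²γ_{lj} for every j, where ∂ₖ denotes the directional derivative along the k-th standard basis vector of ℂⁿ. Then ∑_{j=1}^{n} bⱼ² is constant on U. -/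
/-!
Along the `k`-th coordinate direction, `½ ∂ₖ ∑ⱼ bⱼ² = ∑ⱼ bⱼ ∂ₖbⱼ`. The off-diagonal equations give
`bⱼ ∂ₖbⱼ = -γⱼₖ bⱼ²` for `j ≠ k`, and the diagonal one gives `bₖ ∂ₖbₖ = ∑_{l≠k} bₗ² γₗₖ`, so the
sum cancels. Hence `∑ⱼ bⱼ²` has zero derivative on the connected open set `U`.
-/

noncomputable section

open Finset

def pdS {n : ℕ} (k : Fin n) (F : (Fin n → ℂ) → ℂ) : (Fin n → ℂ) → ℂ :=
  fun u => fderiv ℂ F u (Pi.single k 1)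

theorem sum_mul_eq_zero_of_diagonal_balance {ι K : Type*} [Fintype ι] [DecidableEq ι] [Field K]
    (x d g : ι → K) (k : ι) (hxk : x k ≠ 0) (hoff : ∀ j, j ≠ k → d j = -g j * x j)
    (hdiag : d k = (x k)⁻¹ * ∑ l ∈ univ \ {k}, x l ^ 2 * g l) :
    ∑ j, x j * d j = 0 := by
  rw [← insert_erase (mem_univ k), sum_insert (notMem_erase k _), ← sdiff_singleton_eq_erase,
    hdiag, mul_inv_cancel_left₀ hxk, ← sum_add_distrib]
  refine sum_eq_zero fun j hj => ?_
  rw [hoff j (by simpa using hj)]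
  ring

theorem pdS_sum_sq {n : ℕ} (k : Fin n) (b : Fin n → (Fin n → ℂ) → ℂ) {u : Fin n → ℂ}
    (hb : ∀ j, DifferentiableAt ℂ (b j) u) :
    pdS k (fun v => ∑ j, b j v ^ 2) u = 2 * ∑ j, b j u * pdS k (b j) u := by
  simp only [pdS, fderiv_fun_sum fun j _ => (hb j).fun_pow 2, fderiv_fun_pow 2 (hb _),
    _root_.sum_apply, _root_.smul_apply, smul_eq_mul, nsmul_eq_mul, mul_sum]
  refine sum_congr rfl fun j _ => ?_
  ring

theorem fderiv_eq_zero_of_pdS_eq_zero {n : ℕ} {F : (Fin n → ℂ) → ℂ} {u : Fin n → ℂ}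
    (h : ∀ k, pdS k F u = 0) : fderiv ℂ F u = 0 := by
  refine ContinuousLinearMap.coe_injective (LinearMap.pi_ext fun k c => ?_)
  rw [← mul_one c, ← smul_eq_mul, Pi.single_smul']
  simp [show fderiv ℂ F u (Pi.single k 1) = 0 from h k]

theorem stmt16_general (n : ℕ)
    (U : Set (Fin n → ℂ)) (hU : IsOpen U) (hUconn : IsConnected U)
    (γ : Fin n → Fin n → (Fin n → ℂ) → ℂ)
    (b : Fin n → (Fin n → ℂ) → ℂ)
    (hbdiff : ∀ j, DifferentiableOn ℂ (b j) U)
    (hbne : ∀ j, ∀ u ∈ U, b j u ≠ 0)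
    (heq : ∀ j k : Fin n, j ≠ k → ∀ u ∈ U, pdS k (b j) u = - γ j k u * b j u)
    (heq' : ∀ j : Fin n, ∀ u ∈ U,
      pdS j (b j) u = (b j u)⁻¹ * ∑ l ∈ Finset.univ \ {j}, (b l u)^2 * γ l j u) :
    ∃ c : ℂ, ∀ u ∈ U, ∑ j, (b j u)^2 = c := by
  have hbAt : ∀ u ∈ U, ∀ j, DifferentiableAt ℂ (b j) u := fun u hu j =>
    (hbdiff j u hu).differentiableAt (hU.mem_nhds hu)
  refine hU.exists_is_const_of_fderiv_eq_zero hUconn.isPreconnected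
    (fun u hu => (DifferentiableAt.fun_sum fun j _ => (hbAt u hu j).pow 2).differentiableWithinAt)
    fun u hu => fderiv_eq_zero_of_pdS_eq_zero fun k => ?_
  rw [pdS_sum_sq k b (hbAt u hu),
    sum_mul_eq_zero_of_diagonal_balance (b · u) (fun j => pdS k (b j) u) (γ · k u) k (hbne k u hu)
      (fun j hj => heq j k hj u hu) (heq' k u hu), mul_zero]

/-- the prime integral of the system (hoj)–(ajj): if
`∂ₖbⱼ = −γ_{jk}bⱼ` for `j ≠ k` and `∂ⱼbⱼ = bⱼ⁻¹ ∑_{l≠j} bₗ²γ_{lj}`, then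
`∑ⱼ bⱼ²` is constant on the open connected set `U`. -/
theorem stmt16 (n : ℕ) (hn : 2 ≤ n)
    (U : Set (Fin n → ℂ)) (hU : IsOpen U) (hUconn : IsConnected U)
    (γ : Fin n → Fin n → (Fin n → ℂ) → ℂ)
    (b : Fin n → (Fin n → ℂ) → ℂ)
    (hbdiff : ∀ j, DifferentiableOn ℂ (b j) U)
    (hbne : ∀ j, ∀ u ∈ U, b j u ≠ 0)
    (heq : ∀ j k : Fin n, j ≠ k → ∀ u ∈ U, pdS k (b j) u = - γ j k u * b j u)
    (heq' : ∀ j : Fin n, ∀ u ∈ U,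
      pdS j (b j) u = (b j u)⁻¹ * ∑ l ∈ Finset.univ \ {j}, (b l u)^2 * γ l j u) :
    ∃ c : ℂ, ∀ u ∈ U, ∑ j, (b j u)^2 = c :=
  stmt16_general n U hU hUconn γ b hbdiff hbne heq heq'
end
end

section
/- Let n ≥ 2, let U ⊆ ℂⁿ be open, let γ_{jk} : U → ℂ (j ≠ k) be functions, let b₁,…,bₙ : U → ℂ be differentiable nonvanishing functions satisfying ∂ₖbⱼ = −γ_{jk}·bⱼ for all j ≠ k and ∂ₖbₖ = bₖ⁻¹·∑_{l≠k} bₗ²γ_{lk} for every k, and let R : U → Mₙ(ℂ) be a differentiable matrix-valued map with R(u)ᵀR(u) = Iₙ for all u, whose columns vⱼ satisfy e₁ᵀvⱼ = −i·bⱼ (e₁ the first standard basis vector of ℂⁿ). For each k define the matrix-valued function Υₖ := −(∂ₖR)·Rᵀ − ∑_{j≠k} γ_{jk}·(bⱼ/bₖ)·(vₖvⱼᵀ − vⱼvₖᵀ). Then e₁ᵀΥₖ = 0 on U for every k. -/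
noncomputable section

open Complex Finset

/-- Directional (partial) derivative of a matrix-valued map on ℂⁿ (matrices as
`Fin n → Fin n → ℂ`) along the k-th standard basis vector. -/
def pdM {n : ℕ} (k : Fin n) (R : (Fin n → ℂ) → (Fin n → Fin n → ℂ)) :
    (Fin n → ℂ) → (Fin n → Fin n → ℂ) :=
  fun u => fderiv ℂ R u (Pi.single k 1)

/-- the matrices `Υₖ := −(∂ₖR)Rᵀ − ∑_{j≠k} γ_{jk}(bⱼ/bₖ)(vₖvⱼᵀ − vⱼvₖᵀ)`
(where `vⱼ` is the j-th column of the orthogonal frame `R`, with first entry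
`−i·bⱼ`) satisfy `e₁ᵀΥₖ = 0` on `U`. -/
theorem stmt17 (n : ℕ) (hn : 2 ≤ n)
    (U : Set (Fin n → ℂ)) (hU : IsOpen U)
    (γ : Fin n → Fin n → (Fin n → ℂ) → ℂ)
    (b : Fin n → (Fin n → ℂ) → ℂ)
    (hbdiff : ∀ j, DifferentiableOn ℂ (b j) U)
    (hbne : ∀ j, ∀ u ∈ U, b j u ≠ 0)
    (heq : ∀ j k : Fin n, j ≠ k → ∀ u ∈ U, pdS k (b j) u = - γ j k u * b j u)
    (heq' : ∀ k : Fin n, ∀ u ∈ U,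
      pdS k (b k) u = (b k u)⁻¹ * ∑ l ∈ Finset.univ \ {k}, (b l u)^2 * γ l k u)
    (R : (Fin n → ℂ) → (Fin n → Fin n → ℂ))
    (hRdiff : DifferentiableOn ℂ R U)
    (hRorth : ∀ u ∈ U, ∀ i j : Fin n,
      ∑ r, R u r i * R u r j = if i = j then (1 : ℂ) else 0)
    (hRfirst : ∀ u ∈ U, ∀ j : Fin n,
      R u ⟨0, by omega⟩ j = -Complex.I * b j u)
    (Υ : Fin n → (Fin n → ℂ) → (Fin n → Fin n → ℂ))
    (hΥ : ∀ k u p q, Υ k u p q =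
      -(∑ r, pdM k R u p r * R u q r)
        - ∑ j ∈ Finset.univ \ {k}, γ j k u * (b j u / b k u) *
            (R u p k * R u q j - R u p j * R u q k)) :
    ∀ k : Fin n, ∀ u ∈ U, ∀ q : Fin n, Υ k u ⟨0, by omega⟩ q = 0 := by
  intro k u hu q
  have hUu : U ∈ nhds u := hU.mem_nhds hu
  have hRat : DifferentiableAt ℂ R u := (hRdiff u hu).differentiableAt hUu
  have hbat : ∀ r, DifferentiableAt ℂ (b r) u :=
    fun r => ((hbdiff r) u hu).differentiableAt hUu
  have hk0 : b k u ≠ 0 := hbne k u hu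
  set z : Fin n := ⟨0, by omega⟩ with hz
  have hD : ∀ r : Fin n, pdM k R u z r = -Complex.I * pdS k (b r) u := by
    intro r
    set L : (Fin n → Fin n → ℂ) →L[ℂ] ℂ :=
      (ContinuousLinearMap.proj r : (Fin n → ℂ) →L[ℂ] ℂ).comp
        (ContinuousLinearMap.proj z : (Fin n → Fin n → ℂ) →L[ℂ] (Fin n → ℂ)) with hL
    have h1 : HasFDerivAt (fun v => R v z r) (L.comp (fderiv ℂ R u)) u :=
      L.hasFDerivAt.comp u hRat.hasFDerivAt
    have h2 : (fun v => R v z r) =ᶠ[nhds u] (fun v => -Complex.I * b r v) := by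
      filter_upwards [hUu] with v hv
      exact hRfirst v hv r
    have h3 : fderiv ℂ (fun v => -Complex.I * b r v) u = fderiv ℂ (fun v => R v z r) u :=
      (h2.symm).fderiv_eq
    have h4 : fderiv ℂ (fun v => -Complex.I * b r v) u
        = -Complex.I • fderiv ℂ (b r) u := fderiv_const_mul (hbat r) (-Complex.I)
    have h5 : fderiv ℂ (fun v => R v z r) u (Pi.single k 1)
        = fderiv ℂ R u (Pi.single k 1) z r := by
      rw [h1.fderiv]; rfl
    have : pdM k R u z r = fderiv ℂ (fun v => R v z r) u (Pi.single k 1) := (h5).symm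
    rw [pdM] at this ⊢
    rw [this, ← h3, h4]
    simp [pdS]
  rw [hΥ k u z q]
  simp only [hD]
  rw [Finset.sum_eq_sum_sdiff_singleton_add (Finset.mem_univ k)]
  have hA : ∑ r ∈ Finset.univ \ {k}, -Complex.I * pdS k (b r) u * R u q r
      = ∑ r ∈ Finset.univ \ {k}, Complex.I * γ r k u * b r u * R u q r := by
    refine Finset.sum_congr rfl fun r hr => ?_
    have hrk : r ≠ k := by
      have := (Finset.mem_sdiff.mp hr).2
      simpa using this
    rw [heq r k hrk u hu]; ring
  have hB : ∑ j ∈ Finset.univ \ {k}, γ j k u * (b j u / b k u) *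
        (R u z k * R u q j - R u z j * R u q k)
      = ∑ j ∈ Finset.univ \ {k}, (-(Complex.I * γ j k u * b j u * R u q j)
          + ((b j u)^2 * γ j k u) * (Complex.I * (b k u)⁻¹ * R u q k)) := by
    refine Finset.sum_congr rfl fun j hj => ?_
    rw [hRfirst u hu, hRfirst u hu]
    field_simp
    ring
  rw [hA, hB, heq' k u hu, Finset.sum_add_distrib, Finset.sum_neg_distrib,
    ← Finset.sum_mul]
  set T := ∑ r ∈ Finset.univ \ {k}, Complex.I * γ r k u * b r u * R u q r with hT
  set S := ∑ l ∈ Finset.univ \ {k}, (b l u)^2 * γ l k u with hS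
  ring
end
end
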